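/- If M is a product of finitely many matrices from {L, R} containing at least one L and at least one R, then M is not conjugate in SL(2,ℤ) to ±L^k or ±R^k for any integer k. In particular, M is not parabolic. -/

import Mathlib

/-!
Words in `L` and `R` lie in the monoid of integer matrices with nonnegative entries and diagonal
entries `≥ 1`, and in that monoid every entry of a product dominates the corresponding entry of
each factor. A word containing both letters therefore has both off-diagonal entries positive, so
`ad = 1 + bc ≥ 2` forces trace `a + d > 2`. Trace is a conjugation invariant, while `±L^k` and
`±R^k` have trace `±2` (`R` is conjugate to `L⁻¹` by `S`).
-/

open Matrix

namespace Matrix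

variable (n R : Type*) [Fintype n] [DecidableEq n] [Semiring R] [PartialOrder R] [IsOrderedRing R]

def nonnegOneLeDiagSubmonoid : Submonoid (Matrix n n R) where
  carrier := {A | (∀ i j, 0 ≤ A i j) ∧ ∀ i, 1 ≤ A i i}
  one_mem' := ⟨fun i j => by by_cases h : i = j <;> simp [one_apply, h], fun i => by simp⟩
  mul_mem' := by
    rintro A B ⟨hA, hAd⟩ ⟨hB, hBd⟩
    refine ⟨fun i j => Finset.sum_nonneg fun k _ => mul_nonneg (hA i k) (hB k j), fun i => ?_⟩
    calc 1 ≤ A i i * B i i := one_le_mul_of_one_le_of_one_le (hAd i) (hBd i)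
      _ ≤ (A * B) i i :=
        Finset.single_le_sum (fun k _ => mul_nonneg (hA i k) (hB k i)) (Finset.mem_univ i)

variable {n R}

theorem mem_nonnegOneLeDiagSubmonoid {A : Matrix n n R} :
    A ∈ nonnegOneLeDiagSubmonoid n R ↔ (∀ i j, 0 ≤ A i j) ∧ ∀ i, 1 ≤ A i i :=
  Iff.rfl

theorem apply_le_mul_apply_left {A B : Matrix n n R} (hA : A ∈ nonnegOneLeDiagSubmonoid n R)
    (hB : B ∈ nonnegOneLeDiagSubmonoid n R) (i j : n) : A i j ≤ (A * B) i j :=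
  calc A i j ≤ A i j * B j j := le_mul_of_one_le_right (hA.1 i j) (hB.2 j)
    _ ≤ (A * B) i j :=
      Finset.single_le_sum (fun k _ => mul_nonneg (hA.1 i k) (hB.1 k j)) (Finset.mem_univ j)

theorem apply_le_mul_apply_right {A B : Matrix n n R} (hA : A ∈ nonnegOneLeDiagSubmonoid n R)
    (hB : B ∈ nonnegOneLeDiagSubmonoid n R) (i j : n) : B i j ≤ (A * B) i j :=
  calc B i j ≤ A i i * B i j := le_mul_of_one_le_left (hB.1 i j) (hA.2 i)
    _ ≤ (A * B) i j :=
      Finset.single_le_sum (fun k _ => mul_nonneg (hA.1 i k) (hB.1 k j)) (Finset.mem_univ i)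

theorem apply_le_list_prod_apply {l : List (Matrix n n R)}
    (hl : ∀ x ∈ l, x ∈ nonnegOneLeDiagSubmonoid n R) {x : Matrix n n R} (hx : x ∈ l) (i j : n) :
    x i j ≤ l.prod i j := by
  obtain ⟨s, t, rfl⟩ := List.append_of_mem hx
  have hs : s.prod ∈ nonnegOneLeDiagSubmonoid n R :=
    Submonoid.list_prod_mem _ fun y hy => hl y (List.mem_append_left _ hy)
  have ht : t.prod ∈ nonnegOneLeDiagSubmonoid n R :=
    Submonoid.list_prod_mem _ fun y hy => hl y (by simp [hy])
  rw [List.prod_append, List.prod_cons]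
  calc x i j ≤ (x * t.prod) i j := apply_le_mul_apply_left (hl x (by simp)) ht i j
    _ ≤ _ := apply_le_mul_apply_right hs (mul_mem (hl x (by simp)) ht) i j

theorem two_lt_trace_of_mem_nonnegOneLeDiagSubmonoid {K : Type*} [CommRing K] [LinearOrder K]
    [IsStrictOrderedRing K] {A : Matrix (Fin 2) (Fin 2) K}
    (hA : A ∈ nonnegOneLeDiagSubmonoid (Fin 2) K) (hdet : A.det = 1)
    (h01 : 0 < A 0 1) (h10 : 0 < A 1 0) : 2 < A.trace := by
  rw [det_fin_two] at hdet
  rw [trace_fin_two]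
  have := hA.2 0
  have := hA.2 1
  -- `(a + d)² ≥ 4ad = 4(1 + bc) > 4`
  nlinarith [sq_nonneg (A 0 0 - A 1 1), mul_pos h01 h10]

end Matrix

namespace Matrix.SpecialLinearGroup

theorem trace_coe_conj {n R : Type*} [Fintype n] [DecidableEq n] [CommRing R]
    (C A : SpecialLinearGroup n R) :
    trace (↑(C * A * C⁻¹) : Matrix n n R) = trace (A : Matrix n n R) := by
  rw [coe_mul, coe_mul, trace_mul_cycle, ← coe_mul, inv_mul_cancel, coe_one, Matrix.one_mul]

theorem two_lt_trace_list_prod {K : Type*} [CommRing K] [LinearOrder K] [IsStrictOrderedRing K]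
    {l : List (SpecialLinearGroup (Fin 2) K)}
    (hl : ∀ x ∈ l, (x : Matrix (Fin 2) (Fin 2) K) ∈ nonnegOneLeDiagSubmonoid (Fin 2) K)
    {x y : SpecialLinearGroup (Fin 2) K} (hx : x ∈ l) (hy : y ∈ l)
    (hx01 : 0 < (x : Matrix (Fin 2) (Fin 2) K) 0 1)
    (hy10 : 0 < (y : Matrix (Fin 2) (Fin 2) K) 1 0) :
    2 < trace (l.prod : Matrix (Fin 2) (Fin 2) K) := by
  have hprod : (l.prod : Matrix (Fin 2) (Fin 2) K) = (l.map (↑)).prod := by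
    rw [← coeMonoidHom_apply, map_list_prod]
    rfl
  have hl' : ∀ A ∈ l.map (↑), A ∈ nonnegOneLeDiagSubmonoid (Fin 2) K := by
    intro A hA
    obtain ⟨x, hx, rfl⟩ := List.mem_map.1 hA
    exact hl x hx
  refine two_lt_trace_of_mem_nonnegOneLeDiagSubmonoid (hprod ▸ Submonoid.list_prod_mem _ hl')
    l.prod.2 ?_ ?_
  · exact hx01.trans_le (hprod ▸ apply_le_list_prod_apply hl' (List.mem_map_of_mem hx) 0 1)
  · exact hy10.trans_le (hprod ▸ apply_le_list_prod_apply hl' (List.mem_map_of_mem hy) 1 0)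

end Matrix.SpecialLinearGroup

open Matrix.SpecialLinearGroup ModularGroup

theorem ModularGroup.trace_T_zpow (k : ℤ) : trace (↑(T ^ k) : Matrix (Fin 2) (Fin 2) ℤ) = 2 := by
  rw [coe_T_zpow, trace_fin_two]
  norm_num

theorem ModularGroup.coe_S_mul_T_inv_mul_S_inv : ↑(S * T⁻¹ * S⁻¹) = !![(1 : ℤ), 0; 1, 1] := by
  simp [coe_S, coe_inv, adjugate_fin_two]

theorem ModularGroup.trace_S_mul_T_inv_mul_S_inv_zpow (k : ℤ) :
    trace (↑((S * T⁻¹ * S⁻¹) ^ k) : Matrix (Fin 2) (Fin 2) ℤ) = 2 := by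
  rw [conj_zpow, trace_coe_conj, _root_.inv_zpow', trace_T_zpow]

/-- A finite product M of matrices from {L, R} containing both letters is not conjugate
in SL(2,ℤ) to ±L^k or ±R^k for any integer k; in particular M is not parabolic
(its trace does not have absolute value 2). -/
theorem LR_word_not_conjugate_to_parabolic
    (L R : Matrix.SpecialLinearGroup (Fin 2) ℤ)
    (hL : (L : Matrix (Fin 2) (Fin 2) ℤ) = !![1, 1; 0, 1])
    (hR : (R : Matrix (Fin 2) (Fin 2) ℤ) = !![1, 0; 1, 1])
    (l : List (Matrix.SpecialLinearGroup (Fin 2) ℤ))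
    (hmem : ∀ x ∈ l, x = L ∨ x = R)
    (hLmem : L ∈ l) (hRmem : R ∈ l)
    (M : Matrix.SpecialLinearGroup (Fin 2) ℤ) (hM : M = l.prod) :
    (∀ C : Matrix.SpecialLinearGroup (Fin 2) ℤ, ∀ k : ℤ,
      ((C * M * C⁻¹ : Matrix.SpecialLinearGroup (Fin 2) ℤ) : Matrix (Fin 2) (Fin 2) ℤ)
        ≠ ((L ^ k : Matrix.SpecialLinearGroup (Fin 2) ℤ) : Matrix (Fin 2) (Fin 2) ℤ) ∧
      ((C * M * C⁻¹ : Matrix.SpecialLinearGroup (Fin 2) ℤ) : Matrix (Fin 2) (Fin 2) ℤ)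
        ≠ -((L ^ k : Matrix.SpecialLinearGroup (Fin 2) ℤ) : Matrix (Fin 2) (Fin 2) ℤ) ∧
      ((C * M * C⁻¹ : Matrix.SpecialLinearGroup (Fin 2) ℤ) : Matrix (Fin 2) (Fin 2) ℤ)
        ≠ ((R ^ k : Matrix.SpecialLinearGroup (Fin 2) ℤ) : Matrix (Fin 2) (Fin 2) ℤ) ∧
      ((C * M * C⁻¹ : Matrix.SpecialLinearGroup (Fin 2) ℤ) : Matrix (Fin 2) (Fin 2) ℤ)
        ≠ -((R ^ k : Matrix.SpecialLinearGroup (Fin 2) ℤ) : Matrix (Fin 2) (Fin 2) ℤ)) ∧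
    |Matrix.trace ((M : Matrix (Fin 2) (Fin 2) ℤ))| ≠ 2 := by
  have hLT : L = T := Subtype.ext (hL.trans coe_T.symm)
  have hRT : R = S * T⁻¹ * S⁻¹ := Subtype.ext (hR.trans coe_S_mul_T_inv_mul_S_inv.symm)
  have hmemS : ∀ x ∈ l, (x : Matrix (Fin 2) (Fin 2) ℤ) ∈ nonnegOneLeDiagSubmonoid (Fin 2) ℤ := by
    intro x hx
    rcases hmem x hx with rfl | rfl <;>
      simp [mem_nonnegOneLeDiagSubmonoid, Fin.forall_fin_two, hL, hR]
  have htr : 2 < trace (M : Matrix (Fin 2) (Fin 2) ℤ) :=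
    hM ▸ two_lt_trace_list_prod hmemS hLmem hRmem (by simp [hL]) (by simp [hR])
  have hLk (k : ℤ) : trace (↑(L ^ k) : Matrix (Fin 2) (Fin 2) ℤ) = 2 := hLT ▸ trace_T_zpow k
  have hRk (k : ℤ) : trace (↑(R ^ k) : Matrix (Fin 2) (Fin 2) ℤ) = 2 :=
    hRT ▸ trace_S_mul_T_inv_mul_S_inv_zpow k
  refine ⟨fun C k => ?_, fun h => ?_⟩
  · refine ⟨fun h => ?_, fun h => ?_, fun h => ?_, fun h => ?_⟩ <;>
      have := congrArg trace h <;>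
      simp only [trace_coe_conj, trace_neg, hLk, hRk] at this <;>
      linarith
  · rw [abs_of_pos (by linarith)] at h
    linarith
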